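/- There exists a random normed module (E,‖·‖) over ℂ with base ([0,1], Lebesgue σ-algebra, Lebesgue measure), lacking the countable concatenation property, together with f ∈ E*, ξ ∈ L⁰, β ∈ L⁰₊ such that |λξ| ≤ β‖λf‖* for all λ ∈ L⁰(𝓕,ℂ), yet no x ∈ E satisfies f(x) = ξ. Concretely, one can take E to be the L⁰-submodule of L⁰(𝓕,ℂ) generated by finite L⁰-linear combinations of the indicators Ĩ_{[2^{-(n+1)}, 2^{-n}]} (n ∈ ℕ), ‖η‖ = |η|, f = identity, ξ = β = 1 (the constant function 1). -/

import Mathlib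

/-!
Every element of `E` is a finite `L⁰`-combination of indicators of intervals bounded away
from `0`, so it vanishes a.e. on a right neighbourhood of `0`; hence `1 ∉ E`. Yet `1` agrees
with the generator `Ĩ_{[2^{-(n+1)}, 2^{-n}]}` on the `n`-th piece of a countable partition of
`[0,1]` (up to a null set), so `1` lies in the countable concatenation hull of `E`; since
concatenations in `L⁰` are unique, `E` cannot have the countable concatenation property.
The same generators have modulus `≤ 1` and cover `[0,1]` a.e., which forces
`‖λ · id‖* = |λ|` and gives the Helly inequality with `ξ = β = 1`.
-/

open MeasureTheory

noncomputable instance AEEqFun.instCommRing' {α γ : Type*} [MeasurableSpace α] {μ : Measure α}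
    [TopologicalSpace γ] [CommRing γ] [IsTopologicalRing γ] : CommRing (α →ₘ[μ] γ) :=
  { (inferInstance : AddCommGroup (α →ₘ[μ] γ)),
    (inferInstance : CommMonoid (α →ₘ[μ] γ)) with
    left_distrib := fun f g h => by
      apply AEEqFun.ext
      filter_upwards [AEEqFun.coeFn_mul f (g + h), AEEqFun.coeFn_add g h,
        AEEqFun.coeFn_mul f g, AEEqFun.coeFn_mul f h,
        AEEqFun.coeFn_add (f * g) (f * h)] with a h1 h2 h3 h4 h5
      simp only [Pi.mul_apply, Pi.add_apply] at *
      rw [h1, h2, h5, h3, h4, mul_add]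
    right_distrib := fun f g h => by
      apply AEEqFun.ext
      filter_upwards [AEEqFun.coeFn_mul (f + g) h, AEEqFun.coeFn_add f g,
        AEEqFun.coeFn_mul f h, AEEqFun.coeFn_mul g h,
        AEEqFun.coeFn_add (f * h) (g * h)] with a h1 h2 h3 h4 h5
      simp only [Pi.mul_apply, Pi.add_apply] at *
      rw [h1, h2, h5, h3, h4, add_mul]
    zero_mul := fun f => by
      apply AEEqFun.ext
      filter_upwards [AEEqFun.coeFn_mul 0 f, AEEqFun.coeFn_zero (α := α) (μ := μ) (β := γ)]
        with a h1 h2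
      simp only [Pi.mul_apply] at *
      rw [h1, h2]
      simp
    mul_zero := fun f => by
      apply AEEqFun.ext
      filter_upwards [AEEqFun.coeFn_mul f 0, AEEqFun.coeFn_zero (α := α) (μ := μ) (β := γ)]
        with a h1 h2
      simp only [Pi.mul_apply] at *
      rw [h1, h2]
      simp }

namespace RNM

variable {Ω : Type} [MeasurableSpace Ω] {P : Measure Ω}

/-- the pointwise absolute value `L⁰(𝓕,ℂ) → L⁰(𝓕,ℝ)`. -/
noncomputable def L0abs (ξ : Ω →ₘ[P] ℂ) : Ω →ₘ[P] ℝ :=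
  ξ.comp (fun z => ‖z‖) continuous_norm

/-- the canonical embedding `L⁰(𝓕,ℝ) → L⁰(𝓕,ℂ)`. -/
noncomputable def ofRealC (ξ : Ω →ₘ[P] ℝ) : Ω →ₘ[P] ℂ :=
  ξ.comp Complex.ofReal Complex.continuous_ofReal

/-- pointwise complex conjugation on `L⁰(𝓕,ℂ)`. -/
noncomputable def conjC (ξ : Ω →ₘ[P] ℂ) : Ω →ₘ[P] ℂ :=
  ξ.comp (fun z => starRingEnd ℂ z) Complex.continuous_conj

/-- `ξ ∈ L⁰₊₊`, i.e. `ξ > 0` a.e. on `Ω`. -/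
def L0pos (ξ : Ω →ₘ[P] ℝ) : Prop := ∀ᵐ ω ∂P, 0 < ξ ω

/-- `ξ < η` (a.e.) on the whole of `Ω`. -/
def ltAE (ξ η : Ω →ₘ[P] ℝ) : Prop := ∀ᵐ ω ∂P, ξ ω < η ω

/-- the equivalence class `Ĩ_A ∈ L⁰(𝓕,ℂ)` of the indicator of a measurable set `A`. -/
noncomputable def indC (A : Set Ω) (hA : MeasurableSet A) : Ω →ₘ[P] ℂ :=
  AEEqFun.mk (A.indicator fun _ => (1 : ℂ)) (aestronglyMeasurable_const.indicator hA)

/-- the equivalence class `Ĩ_A ∈ L⁰(𝓕,ℝ)` of the indicator of a measurable set `A`. -/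
noncomputable def indR (A : Set Ω) (hA : MeasurableSet A) : Ω →ₘ[P] ℝ :=
  AEEqFun.mk (A.indicator fun _ => (1 : ℝ)) (aestronglyMeasurable_const.indicator hA)

section AELemmas

lemma L0abs_ae (ξ : Ω →ₘ[P] ℂ) : ∀ᵐ ω ∂P, (L0abs ξ) ω = ‖ξ ω‖ :=
  AEEqFun.coeFn_comp _ _ ξ

lemma le_ae {ξ η : Ω →ₘ[P] ℝ} (h : ξ ≤ η) : ∀ᵐ ω ∂P, ξ ω ≤ η ω :=
  AEEqFun.coeFn_le.2 h

lemma le_of_ae {ξ η : Ω →ₘ[P] ℝ} (h : ∀ᵐ ω ∂P, ξ ω ≤ η ω) : ξ ≤ η :=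
  AEEqFun.coeFn_le.1 h

lemma mul_ae {γ : Type*} [TopologicalSpace γ] [CommRing γ] [IsTopologicalRing γ]
    (ξ η : Ω →ₘ[P] γ) : ∀ᵐ ω ∂P, (ξ * η) ω = ξ ω * η ω :=
  AEEqFun.coeFn_mul ξ η

lemma add_ae {γ : Type*} [TopologicalSpace γ] [AddGroup γ] [IsTopologicalAddGroup γ]
    (ξ η : Ω →ₘ[P] γ) : ∀ᵐ ω ∂P, (ξ + η) ω = ξ ω + η ω :=
  AEEqFun.coeFn_add ξ η

lemma sub_ae {γ : Type*} [TopologicalSpace γ] [AddGroup γ] [IsTopologicalAddGroup γ]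
    (ξ η : Ω →ₘ[P] γ) : ∀ᵐ ω ∂P, (ξ - η) ω = ξ ω - η ω :=
  AEEqFun.coeFn_sub ξ η

lemma zero_ae (γ : Type*) [TopologicalSpace γ] [Zero γ] :
    ∀ᵐ ω ∂P, (0 : Ω →ₘ[P] γ) ω = 0 :=
  AEEqFun.coeFn_zero

lemma one_ae (γ : Type*) [TopologicalSpace γ] [One γ] :
    ∀ᵐ ω ∂P, (1 : Ω →ₘ[P] γ) ω = 1 :=
  AEEqFun.coeFn_one

end AELemmas

/-- a countable measurable partition of `Ω`. -/
structure IsMPartition (A : ℕ → Set Ω) : Prop where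
  meas : ∀ n, MeasurableSet (A n)
  disj : Pairwise (Function.onFun Disjoint A)
  cover : (⋃ n, A n) = Set.univ

section Module

variable {E : Type*} [AddCommGroup E] [Module (Ω →ₘ[P] ℂ) E]

variable (P E) in
/-- `E` has the countable concatenation property. -/
def HasCCP : Prop :=
  ∀ (A : ℕ → Set Ω) (hA : IsMPartition A) (x : ℕ → E),
    ∃ x0 : E, ∀ n, indC (P := P) (A n) (hA.meas n) • x0 = indC (P := P) (A n) (hA.meas n) • x n

/-- a subset `S` of `E` has the countable concatenation property. -/
def SetCCP (S : Set E) : Prop :=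
  ∀ (A : ℕ → Set Ω) (hA : IsMPartition A) (x : ℕ → E), (∀ n, x n ∈ S) →
    ∃ x0 ∈ S, ∀ n, indC (P := P) (A n) (hA.meas n) • x0 = indC (P := P) (A n) (hA.meas n) • x n

/-- the countable concatenation hull `H_cc(S)` of a subset `S` of `E`. -/
def Hcc (S : Set E) : Set E :=
  {x | ∃ (A : ℕ → Set Ω) (hA : IsMPartition A) (m : ℕ → E), (∀ n, m n ∈ S) ∧
    ∀ n, indC (P := P) (A n) (hA.meas n) • x = indC (P := P) (A n) (hA.meas n) • m n}

/-- `L⁰`-convexity of a subset of an `L⁰(𝓕,ℂ)`-module. -/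
def L0Convex (S : Set E) : Prop :=
  ∀ x ∈ S, ∀ y ∈ S, ∀ ξ : Ω →ₘ[P] ℝ, 0 ≤ ξ → ξ ≤ 1 →
    ofRealC ξ • x + ofRealC (1 - ξ) • y ∈ S

/-- the random-norm axioms for `nrm : E → L⁰₊`, making `(E, nrm)` an `RN` module over `ℂ`. -/
structure IsRNNorm (nrm : E → (Ω →ₘ[P] ℝ)) : Prop where
  nonneg : ∀ x, 0 ≤ nrm x
  eq_zero_iff : ∀ x, nrm x = 0 ↔ x = 0
  smul_eq : ∀ (ξ : Ω →ₘ[P] ℂ) (x : E), nrm (ξ • x) = L0abs ξ * nrm x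
  add_le : ∀ x y, nrm (x + y) ≤ nrm x + nrm y

/-- the submodule of `P`-a.e. bounded random linear functionals on `(E, nrm)`:
the random conjugate space `E*`. -/
noncomputable def rdual (nrm : E → (Ω →ₘ[P] ℝ)) :
    Submodule (Ω →ₘ[P] ℂ) (E →ₗ[Ω →ₘ[P] ℂ] (Ω →ₘ[P] ℂ)) where
  carrier := {f | ∃ ξ : Ω →ₘ[P] ℝ, 0 ≤ ξ ∧ ∀ x, L0abs (f x) ≤ ξ * nrm x}
  zero_mem' := by
    refine ⟨0, le_refl 0, fun x => ?_⟩
    apply le_of_ae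
    have e0 : ((0 : E →ₗ[Ω →ₘ[P] ℂ] (Ω →ₘ[P] ℂ)) x) = (0 : Ω →ₘ[P] ℂ) := rfl
    filter_upwards [L0abs_ae ((0 : E →ₗ[Ω →ₘ[P] ℂ] (Ω →ₘ[P] ℂ)) x),
      mul_ae (0 : Ω →ₘ[P] ℝ) (nrm x), zero_ae ℝ, zero_ae ℂ] with ω h1 h2 h3 h4
    rw [h1, h2, h3, e0, h4]
    simp
  add_mem' := by
    rintro f g ⟨ξ, hξ0, hξ⟩ ⟨η, hη0, hη⟩
    have hsum : (0 : Ω →ₘ[P] ℝ) ≤ ξ + η := by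
      apply le_of_ae
      filter_upwards [le_ae hξ0, le_ae hη0, add_ae ξ η, zero_ae ℝ] with ω h1 h2 h3 h4
      rw [h3, h4]
      rw [h4] at h1 h2
      linarith
    refine ⟨ξ + η, hsum, fun x => ?_⟩
    apply le_of_ae
    have e1 : ((f + g) x) = f x + g x := rfl
    filter_upwards [L0abs_ae ((f + g) x), add_ae (f x) (g x),
      mul_ae (ξ + η) (nrm x), add_ae ξ η, mul_ae ξ (nrm x), mul_ae η (nrm x),
      le_ae (hξ x), le_ae (hη x), L0abs_ae (f x), L0abs_ae (g x)]
      with ω h1 h2 h3 h4 h5 h6 h7 h8 h9 h10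
    rw [h1, h3, h4, e1, h2]
    rw [h9, h5] at h7
    rw [h10, h6] at h8
    calc ‖f x ω + g x ω‖ ≤ ‖f x ω‖ + ‖g x ω‖ :=
          norm_add_le _ _
      _ ≤ ξ ω * nrm x ω + η ω * nrm x ω := add_le_add h7 h8
      _ = (ξ ω + η ω) * nrm x ω := by ring
  smul_mem' := by
    rintro c f ⟨ξ, hξ0, hξ⟩
    have hpos : (0 : Ω →ₘ[P] ℝ) ≤ L0abs c * ξ := by
      apply le_of_ae
      filter_upwards [mul_ae (L0abs c) ξ, L0abs_ae c, le_ae hξ0, zero_ae ℝ]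
        with ω h1 h2 h3 h4
      rw [h1, h2, h4]
      rw [h4] at h3
      positivity
    refine ⟨L0abs c * ξ, hpos, fun x => ?_⟩
    apply le_of_ae
    have e1 : ((c • f) x) = c * f x := rfl
    filter_upwards [L0abs_ae ((c • f) x), mul_ae c (f x),
      mul_ae (L0abs c * ξ) (nrm x), mul_ae (L0abs c) ξ, L0abs_ae c,
      le_ae (hξ x), L0abs_ae (f x), mul_ae ξ (nrm x)] with ω h1 h2 h3 h4 h5 h6 h7 h8
    rw [h1, h3, h4, h5, e1, h2]
    rw [h7, h8] at h6
    have h0 : (0:ℝ) ≤ ‖c ω‖ := norm_nonneg _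
    calc ‖c ω * f x ω‖ = ‖c ω‖ * ‖f x ω‖ := norm_mul _ _
      _ ≤ ‖c ω‖ * (ξ ω * nrm x ω) := mul_le_mul_of_nonneg_left h6 h0
      _ = ‖c ω‖ * ξ ω * nrm x ω := by ring

/-- the conjugate random norm `‖f‖* = ⋁{|f(y)| : ‖y‖ ≤ 1}` (the lattice supremum, when
it exists). -/
noncomputable def dnorm (nrm : E → (Ω →ₘ[P] ℝ))
    (f : E →ₗ[Ω →ₘ[P] ℂ] (Ω →ₘ[P] ℂ)) : Ω →ₘ[P] ℝ := by
  classical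
  exact if h : ∃ s : Ω →ₘ[P] ℝ, IsLUB {a | ∃ y : E, nrm y ≤ 1 ∧ a = L0abs (f y)} s
    then h.choose else 0

/-- the random natural embedding of `E` into functionals on its random conjugate space. -/
noncomputable def Jmap (nrm : E → (Ω →ₘ[P] ℝ)) (x : E) :
    (↥(rdual nrm)) →ₗ[Ω →ₘ[P] ℂ] (Ω →ₘ[P] ℂ) where
  toFun f := f.1 x
  map_add' f g := rfl
  map_smul' c f := rfl

end Module

section Topologies

/-- a topology built from a directed family of "balls". -/
def ballTop {X ι : Type*} [Nonempty ι] (ball : X → ι → Set X)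
    (dir : ∀ x i j, ∃ k, ball x k ⊆ ball x i ∩ ball x j) : TopologicalSpace X where
  IsOpen B := ∀ x ∈ B, ∃ i, ball x i ⊆ B
  isOpen_univ := fun x _ => ⟨Classical.arbitrary ι, fun _ _ => trivial⟩
  isOpen_inter := fun B C hB hC x hx => by
    obtain ⟨i, hi⟩ := hB x hx.1
    obtain ⟨j, hj⟩ := hC x hx.2
    obtain ⟨k, hk⟩ := dir x i j
    exact ⟨k, fun y hy => ⟨hi (hk hy).1, hj (hk hy).2⟩⟩
  isOpen_sUnion := fun S hS x hx => by
    obtain ⟨B, hB, hxB⟩ := hx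
    obtain ⟨i, hi⟩ := hS B hB x hxB
    exact ⟨i, fun y hy => ⟨B, hB, hi hy⟩⟩

instance L0posNonempty : Nonempty {ε : Ω →ₘ[P] ℝ // L0pos ε} := by
  refine ⟨⟨1, ?_⟩⟩
  filter_upwards [one_ae (P := P) ℝ] with ω h
  rw [h]; exact one_pos

instance : Nonempty {e : ℝ // 0 < e} := ⟨⟨1, one_pos⟩⟩

instance : Nonempty {l : ℝ // 0 < l ∧ l < 1} := ⟨⟨1/2, by norm_num⟩⟩

lemma L0pos_inf {ε δ : Ω →ₘ[P] ℝ} (hε : L0pos ε) (hδ : L0pos δ) : L0pos (ε ⊓ δ) := by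
  filter_upwards [hε, hδ, AEEqFun.coeFn_inf ε δ] with ω h1 h2 h3
  rw [h3]; exact lt_inf_iff.2 ⟨h1, h2⟩

lemma ltAE_inf {a ε δ : Ω →ₘ[P] ℝ} (h : ltAE a (ε ⊓ δ)) : ltAE a ε ∧ ltAE a δ := by
  constructor
  · filter_upwards [h, AEEqFun.coeFn_inf ε δ] with ω h1 h2
    rw [h2] at h1; exact h1.trans_le inf_le_left
  · filter_upwards [h, AEEqFun.coeFn_inf ε δ] with ω h1 h2
    rw [h2] at h1; exact h1.trans_le inf_le_right

variable {E : Type*} [AddCommGroup E] [Module (Ω →ₘ[P] ℂ) E]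

/-- the locally `L⁰`-convex topology `𝓣_c` on an `RN` module `(E, nrm)`. -/
noncomputable def TcTop (nrm : E → (Ω →ₘ[P] ℝ)) : TopologicalSpace E :=
  ballTop (ι := {ε : Ω →ₘ[P] ℝ // L0pos ε})
    (fun x ε => {y | ltAE (nrm (y - x)) ε.1})
    (by
      rintro x ⟨ε, hε⟩ ⟨δ, hδ⟩
      exact ⟨⟨ε ⊓ δ, L0pos_inf hε hδ⟩, fun y hy => ⟨(ltAE_inf hy).1, (ltAE_inf hy).2⟩⟩)

/-- the `(ε,λ)`-topology `𝓣_{ε,λ}` on an `RN` module `(E, nrm)`. -/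
noncomputable def TelTop (nrm : E → (Ω →ₘ[P] ℝ)) : TopologicalSpace E :=
  ballTop (ι := {e : ℝ // 0 < e} × {l : ℝ // 0 < l ∧ l < 1})
    (fun x i => {y | ENNReal.ofReal (1 - i.2.1) < P {ω | nrm (y - x) ω < i.1.1}})
    (by
      rintro x ⟨⟨e₁, he₁⟩, ⟨l₁, hl₁⟩⟩ ⟨⟨e₂, he₂⟩, ⟨l₂, hl₂⟩⟩
      refine ⟨⟨⟨min e₁ e₂, lt_min he₁ he₂⟩,
        ⟨min l₁ l₂, lt_min hl₁.1 hl₂.1, lt_of_le_of_lt (min_le_left _ _) hl₁.2⟩⟩,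
        fun y hy => ⟨?_, ?_⟩⟩ <;> simp only [Set.mem_setOf_eq] at hy ⊢
      · refine lt_of_le_of_lt (ENNReal.ofReal_le_ofReal (by
          have := min_le_left l₁ l₂; linarith)) (hy.trans_le (measure_mono fun ω hω =>
          show nrm (y - x) ω < e₁ from lt_of_lt_of_le hω (min_le_left _ _)))
      · refine lt_of_le_of_lt (ENNReal.ofReal_le_ofReal (by
          have := min_le_right l₁ l₂; linarith)) (hy.trans_le (measure_mono fun ω hω =>
          show nrm (y - x) ω < e₂ from lt_of_lt_of_le hω (min_le_right _ _))))

variable (P) in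
/-- the locally `L⁰`-convex weak star topology `σ_c` on the space of random linear
functionals on a module `M`, induced by the pairing with `M`. -/
noncomputable def sigmaCTop (M : Type*) [AddCommGroup M] [Module (Ω →ₘ[P] ℂ) M] :
    TopologicalSpace (M →ₗ[Ω →ₘ[P] ℂ] (Ω →ₘ[P] ℂ)) :=
  ballTop (ι := Finset M × {ε : Ω →ₘ[P] ℝ // L0pos ε})
    (fun g i => {h | ∀ x ∈ i.1, ltAE (L0abs (h x - g x)) i.2.1})
    (by
      classical
      rintro g ⟨s, ε, hε⟩ ⟨t, δ, hδ⟩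
      refine ⟨⟨s ∪ t, ⟨ε ⊓ δ, L0pos_inf hε hδ⟩⟩, fun h hh => ⟨?_, ?_⟩⟩
      · exact fun x hx => (ltAE_inf (hh x (Finset.mem_union_left t hx))).1
      · exact fun x hx => (ltAE_inf (hh x (Finset.mem_union_right s hx))).2)

variable (P) in
/-- the `(ε,λ)` weak star topology `σ_{(ε,λ)}` on the space of random linear functionals
on a module `M`, induced by the pairing with `M`. -/
noncomputable def sigmaElTop (M : Type*) [AddCommGroup M] [Module (Ω →ₘ[P] ℂ) M] :
    TopologicalSpace (M →ₗ[Ω →ₘ[P] ℂ] (Ω →ₘ[P] ℂ)) :=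
  ballTop (ι := Finset M × {e : ℝ // 0 < e} × {l : ℝ // 0 < l ∧ l < 1})
    (fun g i => {h | ∀ x ∈ i.1,
      ENNReal.ofReal (1 - i.2.2.1) < P {ω | (L0abs (h x - g x)) ω < i.2.1.1}})
    (by
      classical
      rintro g ⟨s, ⟨e₁, he₁⟩, ⟨l₁, hl₁⟩⟩ ⟨t, ⟨e₂, he₂⟩, ⟨l₂, hl₂⟩⟩
      refine ⟨⟨s ∪ t, ⟨min e₁ e₂, lt_min he₁ he₂⟩,
        ⟨min l₁ l₂, lt_min hl₁.1 hl₂.1, lt_of_le_of_lt (min_le_left _ _) hl₁.2⟩⟩,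
        fun h hh => ⟨fun x hx => ?_, fun x hx => ?_⟩⟩
      · refine lt_of_le_of_lt (ENNReal.ofReal_le_ofReal (by
          have := min_le_left l₁ l₂; linarith))
          ((hh x (Finset.mem_union_left t hx)).trans_le (measure_mono fun ω hω =>
            show (L0abs (h x - g x)) ω < e₁ from lt_of_lt_of_le hω (min_le_left _ _)))
      · refine lt_of_le_of_lt (ENNReal.ofReal_le_ofReal (by
          have := min_le_right l₁ l₂; linarith))
          ((hh x (Finset.mem_union_right s hx)).trans_le (measure_mono fun ω hω =>
            show (L0abs (h x - g x)) ω < e₂ from lt_of_lt_of_le hω (min_le_right _ _))))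

end Topologies

end RNM

namespace RNM

open Filter Set Topology

variable {Ω : Type} [MeasurableSpace Ω] {P : Measure Ω}

lemma coeFn_indC (A : Set Ω) (hA : MeasurableSet A) :
    indC (P := P) A hA =ᵐ[P] A.indicator fun _ => (1 : ℂ) :=
  AEEqFun.coeFn_mk _ _

lemma L0abs_nonneg (ξ : Ω →ₘ[P] ℂ) : 0 ≤ L0abs ξ :=
  le_of_ae <| by
    filter_upwards [zero_ae ℝ, L0abs_ae ξ] with ω h0 h
    rw [h0, h]
    exact norm_nonneg _

lemma L0abs_eq_zero_iff {ξ : Ω →ₘ[P] ℂ} : L0abs ξ = 0 ↔ ξ = 0 := by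
  simp only [AEEqFun.ext_iff]
  constructor <;> intro h <;>
    filter_upwards [h, L0abs_ae ξ, zero_ae ℝ, zero_ae ℂ] with ω h h1 h2 h3
  · rw [h3, ← norm_eq_zero, ← h1, h, h2]
  · rw [h1, h2, h, h3, norm_zero]

lemma L0abs_mul (ξ η : Ω →ₘ[P] ℂ) : L0abs (ξ * η) = L0abs ξ * L0abs η := by
  apply AEEqFun.ext
  filter_upwards [L0abs_ae (ξ * η), mul_ae ξ η, mul_ae (L0abs ξ) (L0abs η), L0abs_ae ξ,
    L0abs_ae η] with ω h h1 h2 h3 h4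
  rw [h, h1, h2, h3, h4, norm_mul]

lemma L0abs_add_le (ξ η : Ω →ₘ[P] ℂ) : L0abs (ξ + η) ≤ L0abs ξ + L0abs η :=
  le_of_ae <| by
    filter_upwards [L0abs_ae (ξ + η), add_ae ξ η, add_ae (L0abs ξ) (L0abs η), L0abs_ae ξ,
      L0abs_ae η] with ω h h1 h2 h3 h4
    rw [h, h1, h2, h3, h4]
    exact norm_add_le _ _

lemma L0abs_mul_le_of_L0abs_le_one (ξ : Ω →ₘ[P] ℂ) {η : Ω →ₘ[P] ℂ} (hη : L0abs η ≤ 1) :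
    L0abs (ξ * η) ≤ L0abs ξ :=
  le_of_ae <| by
    filter_upwards [L0abs_ae (ξ * η), mul_ae ξ η, L0abs_ae ξ, L0abs_ae η, le_ae hη, one_ae ℝ]
      with ω h h1 h2 h3 hle h1'
    rw [h3, h1'] at hle
    rw [h, h1, h2, norm_mul]
    exact mul_le_of_le_one_right (norm_nonneg _) hle

lemma L0abs_indC_le_one (A : Set Ω) (hA : MeasurableSet A) : L0abs (indC (P := P) A hA) ≤ 1 :=
  le_of_ae <| by
    filter_upwards [L0abs_ae (indC A hA), coeFn_indC A hA, one_ae ℝ] with ω h h1 h2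
    rw [h, h1, h2]
    by_cases hω : ω ∈ A <;> simp [hω]

lemma isRNNorm_L0abs (E : Submodule (Ω →ₘ[P] ℂ) (Ω →ₘ[P] ℂ)) :
    IsRNNorm (fun η : E => L0abs η.1) where
  nonneg x := L0abs_nonneg x.1
  eq_zero_iff _ := L0abs_eq_zero_iff.trans Submodule.coe_eq_zero
  smul_eq ξ x := L0abs_mul ξ x.1
  add_le x y := L0abs_add_le x.1 y.1

lemma subtype_mem_rdual (E : Submodule (Ω →ₘ[P] ℂ) (Ω →ₘ[P] ℂ)) :
    E.subtype ∈ rdual (fun η : E => L0abs η.1) :=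
  have hone : (0 : Ω →ₘ[P] ℝ) ≤ 1 := le_of_ae <| by
    filter_upwards [zero_ae ℝ, one_ae ℝ] with ω h0 h1
    rw [h0, h1]
    exact zero_le_one
  ⟨1, hone, fun x => (one_mul (L0abs x.1)).symm.le⟩

lemma indC_mul_eq_indC_mul_iff {A : Set Ω} (hA : MeasurableSet A) {x y : Ω →ₘ[P] ℂ} :
    indC A hA * x = indC A hA * y ↔ ∀ᵐ ω ∂P, ω ∈ A → x ω = y ω := by
  rw [AEEqFun.ext_iff]
  constructor <;> intro h <;>
    filter_upwards [h, mul_ae (indC A hA) x, mul_ae (indC A hA) y, coeFn_indC A hA]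
      with ω h hx hy hind
  · intro hω
    simpa [hx, hy, hind, hω] using h
  · rw [hx, hy, hind]
    by_cases hω : ω ∈ A <;> simp [hω, h]

lemma IsMPartition.ext {A : ℕ → Set Ω} (hA : IsMPartition A) {x y : Ω →ₘ[P] ℂ}
    (h : ∀ n, indC (A n) (hA.meas n) * x = indC (A n) (hA.meas n) * y) : x = y := by
  apply AEEqFun.ext
  filter_upwards [ae_all_iff.2 fun n => (indC_mul_eq_indC_mul_iff (hA.meas n)).1 (h n)]
    with ω hω
  obtain ⟨n, hn⟩ := mem_iUnion.1 (hA.cover ▸ mem_univ ω)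
  exact hω n hn

lemma SetCCP.hcc_subset {S : Set (Ω →ₘ[P] ℂ)} (hS : SetCCP (P := P) S) :
    Hcc (P := P) S ⊆ S := by
  rintro x ⟨A, hA, m, hmS, hxm⟩
  obtain ⟨x0, hx0S, hx0m⟩ := hS A hA m hmS
  rwa [hA.ext fun n => (hxm n).trans (hx0m n).symm]

lemma one_mem_Hcc_of_ae_cover {S : Set (Ω →ₘ[P] ℂ)} {C : ℕ → Set Ω}
    (hC : ∀ n, MeasurableSet (C n)) (hCS : ∀ n, indC (C n) (hC n) ∈ S)
    (hcov : ∀ᵐ ω ∂P, ∃ n, ω ∈ C n) :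
    1 ∈ Hcc (P := P) S := by
  -- the null set left uncovered by `C` is absorbed into every piece before disjointing
  set N := (⋃ n, C n)ᶜ
  have hA : IsMPartition (disjointed fun n => C n ∪ N) :=
    { meas := MeasurableSet.disjointed fun n => (hC n).union (MeasurableSet.iUnion hC).compl
      disj := disjoint_disjointed _
      cover := by rw [iUnion_disjointed, ← iUnion_union, union_compl_self] }
  refine ⟨_, hA, fun n => indC (C n) (hC n), hCS, fun n => ?_⟩
  rw [smul_eq_mul, smul_eq_mul, indC_mul_eq_indC_mul_iff]
  filter_upwards [hcov, one_ae ℂ, coeFn_indC (C n) (hC n)] with ω hω h1 hind hωA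
  have hωC : ω ∈ C n :=
    (disjointed_subset _ n hωA).resolve_right (not_not.2 (mem_iUnion.2 hω))
  rw [h1, hind, indicator_of_mem hωC]

lemma dnorm_eq_of_isLUB {E : Type*} [AddCommGroup E] [Module (Ω →ₘ[P] ℂ) E]
    {nrm : E → (Ω →ₘ[P] ℝ)} {f : E →ₗ[Ω →ₘ[P] ℂ] (Ω →ₘ[P] ℂ)} {s : Ω →ₘ[P] ℝ}
    (h : IsLUB {a | ∃ y : E, nrm y ≤ 1 ∧ a = L0abs (f y)} s) : dnorm nrm f = s := by
  have hex : ∃ s, IsLUB {a | ∃ y : E, nrm y ≤ 1 ∧ a = L0abs (f y)} s := ⟨s, h⟩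
  simp only [dnorm, dif_pos hex]
  exact hex.choose_spec.unique h

lemma dnorm_smul_subtype (E : Submodule (Ω →ₘ[P] ℂ) (Ω →ₘ[P] ℂ)) {C : ℕ → Set Ω}
    (hC : ∀ n, MeasurableSet (C n)) (hCE : ∀ n, indC (C n) (hC n) ∈ E)
    (hcov : ∀ᵐ ω ∂P, ∃ n, ω ∈ C n) (lam : Ω →ₘ[P] ℂ) :
    dnorm (fun η : E => L0abs η.1) (lam • E.subtype) = L0abs lam := by
  refine dnorm_eq_of_isLUB ⟨?_, fun u hu => ?_⟩
  · rintro _ ⟨y, hy, rfl⟩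
    exact L0abs_mul_le_of_L0abs_le_one lam hy
  have hle : ∀ n, L0abs (lam * indC (C n) (hC n)) ≤ u := fun n =>
    hu ⟨⟨_, hCE n⟩, L0abs_indC_le_one (C n) (hC n), rfl⟩
  refine le_of_ae ?_
  filter_upwards [ae_all_iff.2 fun n => le_ae (hle n),
    ae_all_iff.2 fun n => L0abs_ae (lam * indC (C n) (hC n)),
    ae_all_iff.2 fun n => mul_ae lam (indC (C n) (hC n)),
    ae_all_iff.2 fun n => coeFn_indC (P := P) (C n) (hC n), hcov, L0abs_ae lam]
    with ω hle habs hmul hind ⟨n, hn⟩ hlam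
  simpa [habs n, hmul n, hind n, hn, hlam] using hle n

variable (P) in
def vanishingAlong (l : Filter Ω) : Submodule (Ω →ₘ[P] ℂ) (Ω →ₘ[P] ℂ) where
  carrier := {x | ∀ᶠ ω in l ⊓ ae P, x ω = 0}
  zero_mem' := (zero_ae ℂ).filter_mono inf_le_right
  add_mem' {x y} hx hy := by
    filter_upwards [hx, hy, (add_ae x y).filter_mono inf_le_right] with ω h1 h2 h3
    rw [h3, h1, h2, add_zero]
  smul_mem' c x hx := by
    filter_upwards [hx, (mul_ae c x).filter_mono inf_le_right] with ω h1 h2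
    rw [smul_eq_mul, h2, h1, mul_zero]

lemma indC_mem_vanishingAlong {l : Filter Ω} {A : Set Ω} (hA : MeasurableSet A) (h : Aᶜ ∈ l) :
    indC A hA ∈ vanishingAlong P l := by
  filter_upwards [mem_inf_of_left h, (coeFn_indC A hA).filter_mono inf_le_right] with ω hω hind
  rw [hind, indicator_of_notMem hω]

lemma one_notMem_vanishingAlong {l : Filter Ω} [(l ⊓ ae P).NeBot] :
    1 ∉ vanishingAlong P l := fun h => by
  change ∀ᶠ ω in l ⊓ ae P, (1 : Ω →ₘ[P] ℂ) ω = 0 at h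
  obtain ⟨ω, h0, h1⟩ := (h.and ((one_ae ℂ).filter_mono inf_le_right)).exists
  exact one_ne_zero (h1.symm.trans h0)

lemma inf_ae_neBot {l : Filter Ω} (h : ∀ s ∈ l, P s ≠ 0) : (l ⊓ ae P).NeBot := by
  refine inf_neBot_iff.2 fun s hs t ht => ?_
  by_contra hst
  exact h s hs (measure_mono_null (fun ω hωs hωt => hst ⟨ω, hωs, hωt⟩) ht)

lemma indC_Icc_mem_vanishingAlong {P : Measure ℝ} {a b : ℝ} (ha : 0 < a) :
    indC (Icc a b) measurableSet_Icc ∈ vanishingAlong P (𝓝[>] 0) :=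
  indC_mem_vanishingAlong _ <| mem_nhdsWithin_of_mem_nhds <|
    mem_of_superset (Iio_mem_nhds ha) fun _ hx hx' => not_le.2 hx hx'.1

lemma one_notMem_span_indC_Icc {P : Measure ℝ} [(𝓝[>] (0 : ℝ) ⊓ ae P).NeBot] {a b : ℕ → ℝ}
    (ha : ∀ n, 0 < a n) :
    (1 : ℝ →ₘ[P] ℂ) ∉ Submodule.span (ℝ →ₘ[P] ℂ)
      {g | ∃ n, g = indC (Icc (a n) (b n)) measurableSet_Icc} := by
  refine fun h => one_notMem_vanishingAlong (l := 𝓝[>] 0) (Submodule.span_le.2 ?_ h)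
  rintro _ ⟨n, rfl⟩
  exact indC_Icc_mem_vanishingAlong (ha n)

instance nhdsGT_zero_inf_ae_neBot :
    (𝓝[>] (0 : ℝ) ⊓ ae (volume.restrict (Icc (0 : ℝ) 1))).NeBot := by
  refine inf_ae_neBot fun s hs => ?_
  obtain ⟨ε, hε, hsub⟩ := mem_nhdsGT_iff_exists_Ioo_subset.1 hs
  have hsub' : Ioo 0 (min ε 1) ⊆ Icc (0 : ℝ) 1 :=
    Ioo_subset_Icc_self.trans (Icc_subset_Icc le_rfl (min_le_right _ _))
  refine (lt_of_lt_of_le ?_ (measure_mono (hsub.trans' (Ioo_subset_Ioo_right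
    (min_le_left ε 1))))).ne'
  rw [Measure.restrict_eq_self _ hsub', Real.volume_Ioo]
  simpa using hε

lemma ae_exists_mem_dyadic : ∀ᵐ ω ∂volume.restrict (Icc (0 : ℝ) 1),
    ∃ n : ℕ, ω ∈ Icc ((2 ^ (n + 1))⁻¹ : ℝ) ((2 ^ n)⁻¹) := by
  have hne : ∀ᵐ ω ∂volume.restrict (Icc (0 : ℝ) 1), ω ≠ 0 :=
    ae_restrict_of_ae (compl_mem_ae_iff.2 Real.volume_singleton)
  filter_upwards [ae_restrict_mem measurableSet_Icc, hne] with ω ⟨h0, h1⟩ hω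
  obtain ⟨n, hlt, hle⟩ := exists_nat_pow_near_of_lt_one (h0.lt_of_ne' hω) h1
    (by norm_num : (0 : ℝ) < 2⁻¹) (by norm_num)
  rw [inv_pow] at hlt hle
  exact ⟨n, hlt.le, hle⟩

end RNM

open MeasureTheory RNM in
/-- The Helly counterexample (Remark 3.3): over the base `([0,1], Lebesgue)`, the
submodule `E` of `L⁰(𝓕,ℂ)` generated by the indicators of `[2^{-(n+1)}, 2^{-n}]`, with
`‖η‖ = |η|`, is an `RN` module lacking the countable concatenation property; the
identity functional `f`, `ξ = β = 1` satisfy `|λξ| ≤ β ‖λ f‖*` for all `λ`, yet no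
`x ∈ E` satisfies `f(x) = ξ`. -/
theorem helly_counterexample :
    ∀ P : Measure ℝ, P = MeasureTheory.volume.restrict (Set.Icc (0 : ℝ) 1) →
    ∀ E : Submodule (ℝ →ₘ[P] ℂ) (ℝ →ₘ[P] ℂ),
      E = Submodule.span (ℝ →ₘ[P] ℂ)
        {g | ∃ n : ℕ, g = indC (P := P)
          (Set.Icc (((2 : ℝ) ^ (n + 1))⁻¹) (((2 : ℝ) ^ n)⁻¹)) measurableSet_Icc} →
      IsRNNorm (fun η : ↥E => L0abs η.1) ∧
      ¬ SetCCP (P := P) (E : Set (ℝ →ₘ[P] ℂ)) ∧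
      E.subtype ∈ rdual (fun η : ↥E => L0abs η.1) ∧
      (∀ lam : ℝ →ₘ[P] ℂ,
        L0abs (lam * 1) ≤ 1 * dnorm (fun η : ↥E => L0abs η.1) (lam • E.subtype)) ∧
      ¬ ∃ x : ↥E, E.subtype x = 1 := by
  intro P hP E hE
  subst hP
  have hgen : ∀ n : ℕ, indC (Set.Icc (((2 : ℝ) ^ (n + 1))⁻¹) (((2 : ℝ) ^ n)⁻¹))
      measurableSet_Icc ∈ E := fun n => hE ▸ Submodule.subset_span ⟨n, rfl⟩
  have one_notMem : 1 ∉ E := hE ▸ one_notMem_span_indC_Icc fun n => by positivity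
  refine ⟨isRNNorm_L0abs E, fun hccp => one_notMem ?_, subtype_mem_rdual E, fun lam => ?_,
    fun ⟨x, hx⟩ => one_notMem (hx ▸ x.2)⟩
  · exact hccp.hcc_subset (one_mem_Hcc_of_ae_cover _ hgen ae_exists_mem_dyadic)
  · rw [dnorm_smul_subtype E _ hgen ae_exists_mem_dyadic, mul_one, one_mul]
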